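/- Any approximation of the contraction semigroup e^{tG} transfers to a completely positive approximation of its conjugation semigroup: let G and M be d×d complex matrices, Δt ≥ 0, N ∈ ℕ, C ≥ 0; assume ‖exp(tG)‖ ≤ 1 for all t ≥ 0 and ‖exp(Δt·G) − M‖ ≤ C·Δt^{N+1}. Then for every d×d matrix ρ, ‖exp(Δt·G) ρ exp(Δt·G)ᴴ − M ρ Mᴴ‖₁ ≤ C·Δt^{N+1}·(2 + C·Δt^{N+1})·‖ρ‖₁. -/

import Mathlib

open Matrix
open scoped ComplexOrder

/-- The positive semidefinite square root of a matrix (defined to be `0` if the matrix is not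
positive semidefinite). -/
noncomputable def matSqrt {d : ℕ} (A : Matrix (Fin d) (Fin d) ℂ) : Matrix (Fin d) (Fin d) ℂ :=
  open scoped Classical in
  if h : A.PosSemidef then
    (h.1.eigenvectorUnitary : Matrix (Fin d) (Fin d) ℂ) *
      diagonal (fun i => ((Real.sqrt (h.1.eigenvalues i) : ℝ) : ℂ)) *
      (star h.1.eigenvectorUnitary : Matrix (Fin d) (Fin d) ℂ)
  else 0

/-- The trace norm `‖A‖₁ = Re (Tr √(AᴴA))` of a complex matrix. -/
noncomputable def traceNorm {d : ℕ} (A : Matrix (Fin d) (Fin d) ℂ) : ℝ :=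
  (Matrix.trace (matSqrt (Aᴴ * A))).re

/-- The operator norm of a matrix induced by the Euclidean (ℓ²) norm on `ℂ^d`. -/
noncomputable def opNorm {d : ℕ} (A : Matrix (Fin d) (Fin d) ℂ) : ℝ :=
  ‖Matrix.toEuclideanCLM (𝕜 := ℂ) A‖

/-!
Write `E = exp(Δt G)` and `ε = C Δt^{N+1}`. Then
`E ρ Eᴴ − M ρ Mᴴ = (E − M) ρ Eᴴ + M ρ (E − M)ᴴ`, and the trace norm satisfies
`‖X ρ Y‖₁ ≤ ‖X‖ ‖Y‖ ‖ρ‖₁`; with `‖E‖ ≤ 1`, `‖E − M‖ ≤ ε` and `‖M‖ ≤ 1 + ε` this gives the bound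
`ε · 1 + (1 + ε) · ε = ε (2 + ε)`.

The trace-norm inequalities come from the duality `‖A‖₁ = max {Re tr (K A) : ‖K‖ ≤ 1}`.
The maximum is attained by the polar decomposition `A = Kᴴ |A|`, built with the continuous
functional calculus, and `Re tr (B P) ≤ ‖B‖ tr P` for `P ≥ 0` is the operator inequality
`√P (B + Bᴴ) √P ≤ ‖B + Bᴴ‖ P` under the trace.
-/

open scoped Matrix.Norms.L2Operator MatrixOrder

lemma CFC.mul_eq_self_of_abs_mul_eq {A : Type*} [CStarAlgebra A] [PartialOrder A]
    [StarOrderedRing A] {a r : A} (h : CFC.abs a * r = CFC.abs a) : a * r = a := by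
  have h0 : CFC.abs a * (1 - r) = 0 := by rw [mul_sub, h, mul_one, sub_self]
  have : star (a * (1 - r)) * (a * (1 - r)) =
      star (CFC.abs a * (1 - r)) * (CFC.abs a * (1 - r)) := by
    simp only [star_mul, (CFC.abs_nonneg a).isSelfAdjoint.star_eq, mul_assoc,
      ← mul_assoc (CFC.abs a), CFC.abs_mul_abs]
  rw [h0, mul_zero, CStarRing.star_mul_self_eq_zero_iff, mul_one_sub, sub_eq_zero] at this
  exact this.symm

namespace Matrix

variable {n : Type*} [Fintype n]

lemma re_trace_mono {A B : Matrix n n ℂ} (h : A ≤ B) : A.trace.re ≤ B.trace.re := by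
  simpa [trace_sub] using (Complex.le_def.mp (le_iff.mp h).trace_nonneg).1

lemma re_trace_nonneg {P : Matrix n n ℂ} (hP : 0 ≤ P) : 0 ≤ P.trace.re := by
  simpa using re_trace_mono hP

variable [DecidableEq n]

lemma re_trace_mul_le_of_nonneg (B : Matrix n n ℂ) {P : Matrix n n ℂ} (hP : 0 ≤ P) :
    (B * P).trace.re ≤ ‖B‖ * P.trace.re := by
  set S := CFC.sqrt P
  have hS : star S = S := (CFC.sqrt_nonneg P).isSelfAdjoint
  have hSS : S * S = P := CFC.sqrt_mul_sqrt_self P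
  have htr : (star S * B * S).trace = (B * P).trace := by
    rw [hS, trace_mul_comm, ← mul_assoc, hSS, trace_mul_comm]
  have hre : (star S * (B + star B) * S).trace.re = 2 * (B * P).trace.re := by
    have hstar : star S * star B * S = star (star S * B * S) := by
      simp only [star_mul, star_star, mul_assoc]
    rw [mul_add, add_mul, trace_add, hstar, star_eq_conjTranspose (star S * B * S),
      trace_conjTranspose, htr, Complex.add_re, Complex.star_def, Complex.conj_re, two_mul]
  have hconj : star S * (B + star B) * S ≤ ‖B + star B‖ • (star S * S) :=
    CStarAlgebra.star_left_conjugate_le_norm_smul (.add_star_self B)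
  have hnorm : ‖B + star B‖ ≤ 2 * ‖B‖ := by
    simpa [two_mul] using norm_add_le B (star B)
  have htrace := re_trace_mono hconj
  rw [hre, trace_smul, hS, hSS, Complex.real_smul, Complex.re_ofReal_mul] at htrace
  nlinarith [mul_le_mul_of_nonneg_right hnorm (re_trace_nonneg hP)]

/-- The contraction is `|A|⁺ Aᴴ`, where `|A|⁺ = cfc (·⁻¹) |A|` is the pseudo-inverse of `|A|`
(thanks to `0⁻¹ = 0`, `|A| |A|⁺` is the projection onto the range of `|A|`). Any function is
continuous on the finite spectrum of a matrix, so the functional calculus applies to `(·⁻¹)`. -/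
lemma exists_norm_le_one_mul_eq_cfcAbs (A : Matrix n n ℂ) :
    ∃ K : Matrix n n ℂ, ‖K‖ ≤ 1 ∧ K * A = CFC.abs A ∧ Kᴴ * CFC.abs A = A := by
  set P := CFC.abs A
  have hPP : P * P = Aᴴ * A := CFC.abs_mul_abs A
  have hc (f : ℝ → ℝ) : ContinuousOn f (spectrum ℝ P) := P.finite_real_spectrum.continuousOn f
  set Q := cfc (·⁻¹ : ℝ → ℝ) P
  set R := cfc (fun x : ℝ => x * x⁻¹) P
  have hQ : Qᴴ = Q := (cfc_predicate _ P : IsSelfAdjoint Q)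
  have hPQ : P * Q = R := by
    conv_lhs => rw [← cfc_id' ℝ P]
    exact (cfc_mul _ _ P (hc _) (hc _)).symm
  have hQP : Q * P = R := by
    conv_lhs => rw [← cfc_id' ℝ P]
    rw [← cfc_mul _ _ P (hc _) (hc _)]
    exact cfc_congr fun x _ => mul_comm _ _
  have hRP : R * P = P := by
    conv_lhs => rw [← cfc_id' ℝ P]
    rw [← cfc_mul _ _ P (hc _) (hc _)]
    simp only [mul_inv_mul_cancel, cfc_id' ℝ P]
  have hR : ‖R‖ ≤ 1 := by
    refine norm_cfc_le zero_le_one fun x _ => ?_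
    rcases eq_or_ne x 0 with rfl | hx <;> simp [*]
  have hAR : A * R = A :=
    CFC.mul_eq_self_of_abs_mul_eq (by rw [← hQP, ← mul_assoc, hPQ, hRP])
  refine ⟨Q * Aᴴ, ?_, ?_, ?_⟩
  · have hK : (Q * Aᴴ) * (Q * Aᴴ)ᴴ = R * R := by
      rw [conjTranspose_mul, conjTranspose_conjTranspose, hQ, mul_assoc, ← mul_assoc Aᴴ, ← hPP,
        ← mul_assoc, ← mul_assoc, hQP, mul_assoc, hPQ]
    have hKK : ‖Q * Aᴴ‖ * ‖Q * Aᴴ‖ ≤ 1 := by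
      rw [← CStarRing.norm_self_mul_star, star_eq_conjTranspose, hK]
      calc ‖R * R‖ ≤ ‖R‖ * ‖R‖ := norm_mul_le R R
        _ ≤ 1 := mul_le_one₀ hR (norm_nonneg R) hR
    nlinarith [norm_nonneg (Q * Aᴴ)]
  · rw [mul_assoc, ← hPP, ← mul_assoc, hQP, hRP]
  · rw [conjTranspose_mul, conjTranspose_conjTranspose, hQ, mul_assoc, hQP, hAR]

lemma re_trace_mul_le_norm_mul_re_trace_cfcAbs (B A : Matrix n n ℂ) :
    (B * A).trace.re ≤ ‖B‖ * (CFC.abs A).trace.re := by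
  obtain ⟨K, hK, -, hKA⟩ := exists_norm_le_one_mul_eq_cfcAbs A
  have hBK : ‖B * Kᴴ‖ ≤ ‖B‖ := by
    simpa [l2_opNorm_conjTranspose] using norm_mul_le_of_le (le_refl ‖B‖) (by
      rwa [l2_opNorm_conjTranspose] : ‖Kᴴ‖ ≤ 1)
  calc (B * A).trace.re = (B * Kᴴ * CFC.abs A).trace.re := by rw [mul_assoc, hKA]
    _ ≤ ‖B * Kᴴ‖ * (CFC.abs A).trace.re := re_trace_mul_le_of_nonneg _ (CFC.abs_nonneg A)
    _ ≤ ‖B‖ * (CFC.abs A).trace.re :=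
        mul_le_mul_of_nonneg_right hBK (re_trace_nonneg (CFC.abs_nonneg A))

end Matrix

lemma matSqrt_conjTranspose_mul_self {d : ℕ} (A : Matrix (Fin d) (Fin d) ℂ) :
    matSqrt (Aᴴ * A) = CFC.abs A := by
  have hA := posSemidef_conjTranspose_mul_self A
  rw [CFC.abs, CFC.sqrt_eq_real_sqrt _ (star_mul_self_nonneg A), cfcₙ_eq_cfc]
  change _ = cfc Real.sqrt (Aᴴ * A)
  rw [hA.1.cfc_eq, matSqrt, dif_pos hA, IsHermitian.cfc, Unitary.conjStarAlgAut_apply]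
  rfl

section TraceNorm

variable {d : ℕ}

lemma traceNorm_eq_re_trace_cfcAbs (A : Matrix (Fin d) (Fin d) ℂ) :
    traceNorm A = (CFC.abs A).trace.re := by
  rw [traceNorm, matSqrt_conjTranspose_mul_self]

lemma traceNorm_nonneg (A : Matrix (Fin d) (Fin d) ℂ) : 0 ≤ traceNorm A :=
  traceNorm_eq_re_trace_cfcAbs A ▸ re_trace_nonneg (CFC.abs_nonneg A)

lemma re_trace_mul_le_norm_mul_traceNorm (B A : Matrix (Fin d) (Fin d) ℂ) :
    (B * A).trace.re ≤ ‖B‖ * traceNorm A :=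
  traceNorm_eq_re_trace_cfcAbs A ▸ re_trace_mul_le_norm_mul_re_trace_cfcAbs B A

lemma exists_norm_le_one_traceNorm_eq (A : Matrix (Fin d) (Fin d) ℂ) :
    ∃ K : Matrix (Fin d) (Fin d) ℂ, ‖K‖ ≤ 1 ∧ traceNorm A = (K * A).trace.re := by
  obtain ⟨K, hK, hKA, -⟩ := exists_norm_le_one_mul_eq_cfcAbs A
  exact ⟨K, hK, by rw [hKA, traceNorm_eq_re_trace_cfcAbs]⟩

lemma traceNorm_add_le (A B : Matrix (Fin d) (Fin d) ℂ) :
    traceNorm (A + B) ≤ traceNorm A + traceNorm B := by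
  obtain ⟨K, hK, hKAB⟩ := exists_norm_le_one_traceNorm_eq (A + B)
  have hA := re_trace_mul_le_norm_mul_traceNorm K A
  have hB := re_trace_mul_le_norm_mul_traceNorm K B
  rw [hKAB, mul_add, trace_add, Complex.add_re]
  nlinarith [traceNorm_nonneg A, traceNorm_nonneg B]

lemma traceNorm_mul_mul_le (X ρ Y : Matrix (Fin d) (Fin d) ℂ) :
    traceNorm (X * ρ * Y) ≤ ‖X‖ * ‖Y‖ * traceNorm ρ := by
  obtain ⟨K, hK, hKXρY⟩ := exists_norm_le_one_traceNorm_eq (X * ρ * Y)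
  have hYKX : ‖Y * K * X‖ ≤ ‖X‖ * ‖Y‖ :=
    calc ‖Y * K * X‖ ≤ ‖Y‖ * ‖K‖ * ‖X‖ := norm_mul₃_le
      _ ≤ ‖Y‖ * 1 * ‖X‖ := by gcongr
      _ = ‖X‖ * ‖Y‖ := by ring
  calc traceNorm (X * ρ * Y) = (Y * K * X * ρ).trace.re := by
        rw [hKXρY, trace_mul_comm, mul_assoc (X * ρ), trace_mul_comm, ← mul_assoc]
    _ ≤ ‖Y * K * X‖ * traceNorm ρ := re_trace_mul_le_norm_mul_traceNorm _ ρ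
    _ ≤ ‖X‖ * ‖Y‖ * traceNorm ρ := mul_le_mul_of_nonneg_right hYKX (traceNorm_nonneg ρ)

lemma traceNorm_conj_sub_conj_le (E M ρ : Matrix (Fin d) (Fin d) ℂ) :
    traceNorm (E * ρ * Eᴴ - M * ρ * Mᴴ) ≤ ‖E - M‖ * (‖E‖ + ‖M‖) * traceNorm ρ := by
  have hsplit : E * ρ * Eᴴ - M * ρ * Mᴴ = (E - M) * ρ * Eᴴ + M * ρ * (E - M)ᴴ := by
    rw [conjTranspose_sub]
    noncomm_ring
  have h₁ := traceNorm_mul_mul_le (E - M) ρ Eᴴ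
  have h₂ := traceNorm_mul_mul_le M ρ (E - M)ᴴ
  rw [l2_opNorm_conjTranspose] at h₁ h₂
  rw [hsplit]
  linarith [traceNorm_add_le ((E - M) * ρ * Eᴴ) (M * ρ * (E - M)ᴴ)]

end TraceNorm

theorem stmt9_general {d : ℕ} (G M : Matrix (Fin d) (Fin d) ℂ) (Δt : ℝ) (hΔt : 0 ≤ Δt)
    (N : ℕ) (C : ℝ)
    (hcontr : ∀ t : ℝ, 0 ≤ t → opNorm (NormedSpace.exp ((t : ℂ) • G)) ≤ 1)
    (happrox : opNorm (NormedSpace.exp ((Δt : ℂ) • G) - M) ≤ C * Δt ^ (N + 1)) :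
    ∀ ρ : Matrix (Fin d) (Fin d) ℂ,
      traceNorm (NormedSpace.exp ((Δt : ℂ) • G) * ρ * (NormedSpace.exp ((Δt : ℂ) • G))ᴴ
          - M * ρ * Mᴴ)
        ≤ C * Δt ^ (N + 1) * (2 + C * Δt ^ (N + 1)) * traceNorm ρ := by
  intro ρ
  set E := NormedSpace.exp ((Δt : ℂ) • G)
  set ε := C * Δt ^ (N + 1)
  have hE : ‖E‖ ≤ 1 := hcontr Δt hΔt
  have hD : ‖E - M‖ ≤ ε := happrox
  have hM : ‖M‖ ≤ 1 + ε := by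
    linarith [norm_le_norm_add_norm_sub' M E, norm_sub_rev M E]
  calc traceNorm (E * ρ * Eᴴ - M * ρ * Mᴴ) ≤ ‖E - M‖ * (‖E‖ + ‖M‖) * traceNorm ρ :=
        traceNorm_conj_sub_conj_le E M ρ
    _ ≤ ε * (2 + ε) * traceNorm ρ := by
        have hε : 0 ≤ ε := (norm_nonneg _).trans hD
        gcongr ?_ * ?_ * _
        · exact traceNorm_nonneg ρ
        · linarith

/-- Any approximation of the contraction semigroup `e^{tG}` transfers to a completely positive
approximation of its conjugation semigroup:
if `‖exp(tG)‖ ≤ 1` for all `t ≥ 0` and `‖exp(Δt G) − M‖ ≤ C Δt^{N+1}`, then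
`‖exp(Δt G) ρ exp(Δt G)ᴴ − M ρ Mᴴ‖₁ ≤ C Δt^{N+1} (2 + C Δt^{N+1}) ‖ρ‖₁`. -/
theorem stmt9 {d : ℕ} (G M : Matrix (Fin d) (Fin d) ℂ) (Δt : ℝ) (hΔt : 0 ≤ Δt)
    (N : ℕ) (C : ℝ) (hC : 0 ≤ C)
    (hcontr : ∀ t : ℝ, 0 ≤ t → opNorm (NormedSpace.exp ((t : ℂ) • G)) ≤ 1)
    (happrox : opNorm (NormedSpace.exp ((Δt : ℂ) • G) - M) ≤ C * Δt ^ (N + 1)) :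
    ∀ ρ : Matrix (Fin d) (Fin d) ℂ,
      traceNorm (NormedSpace.exp ((Δt : ℂ) • G) * ρ * (NormedSpace.exp ((Δt : ℂ) • G))ᴴ
          - M * ρ * Mᴴ)
        ≤ C * Δt ^ (N + 1) * (2 + C * Δt ^ (N + 1)) * traceNorm ρ :=
  stmt9_general G M Δt hΔt N C hcontr happrox
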